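/- The continued fraction identity [2x, 2y, -2(x+y), 2x] = [2x-1, 1, -2y-1, 2(x+y)-1, 1, 2x-1] holds for all integers x > 0, y < 0 with x + y > 0. -/

import Mathlib

/-- Evaluation of a continued fraction [a₁,…,a_k] = a₁ + 1/(a₂ + 1/(⋯ + 1/a_k))
in ℚ (with the junk convention 0⁻¹ = 0 handling the empty tail). -/
def cfrac : List ℤ → ℚ
  | [] => 0
  | a :: l => (a : ℚ) + (cfrac l)⁻¹

/-! Each negative entry `b` of an even continued fraction is removed by the local move
`[…, a, b, l] = […, a - 1, 1, -b - 1, -l]`, which is the identity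
`a - 1/u = (a - 1) + 1/(1 + 1/(u - 1))` for `u = -[b, l]`. Two such moves turn the left-hand
side into the right-hand side; the side conditions `[b, l] ≠ 0, -1` hold because every tail
that occurs is `< -1`. -/

lemma cfrac_singleton (a : ℤ) : cfrac [a] = a := by
  simp [cfrac]

lemma cfrac_map_neg (l : List ℤ) : cfrac (l.map Neg.neg) = -cfrac l := by
  induction l with
  | nil => simp [cfrac]
  | cons a l ih => simp only [List.map_cons, cfrac, ih, Int.cast_neg, inv_neg]; ring

lemma cfrac_append_congr (p : List ℤ) {l l' : List ℤ} (h : cfrac l = cfrac l') :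
    cfrac (p ++ l) = cfrac (p ++ l') := by
  induction p with
  | nil => exact h
  | cons a p ih => simp only [List.cons_append, cfrac, ih]

lemma cfrac_cons_cons_eq_of_ne (a b : ℤ) (l : List ℤ) (h₀ : cfrac (b :: l) ≠ 0)
    (h₁ : cfrac (b :: l) ≠ -1) :
    cfrac (a :: b :: l) = cfrac ((a - 1) :: 1 :: (-b - 1) :: l.map Neg.neg) := by
  simp only [cfrac, cfrac_map_neg] at h₀ h₁ ⊢
  have hneg : ((-b - 1 : ℤ) : ℚ) + (-cfrac l)⁻¹ = -((b + (cfrac l)⁻¹) + 1) := by push_cast; ring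
  rw [hneg]
  generalize (b : ℚ) + (cfrac l)⁻¹ = v at h₀ h₁ ⊢
  have hv : v + 1 ≠ 0 := fun h => h₁ (by linear_combination h)
  have hmid : 1 + (-(v + 1))⁻¹ = v / (v + 1) := by field_simp; ring
  push_cast
  rw [hmid, inv_div]
  field_simp
  ring

lemma cfrac_cons_lt_neg_one {b : ℤ} {l : List ℤ} (hb : b ≤ -1) (hl : cfrac l < 0) :
    cfrac (b :: l) < -1 := by
  have : (b : ℚ) ≤ -1 := by exact_mod_cast hb
  simp only [cfrac]
  linarith [inv_lt_zero.mpr hl]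

lemma cfrac_cons_lt_zero {a : ℤ} {l : List ℤ} (ha : a ≤ -2) (hl : 1 ≤ cfrac l) : cfrac (a :: l) < 0 := by
  have : (a : ℚ) ≤ -2 := by exact_mod_cast ha
  simp only [cfrac]
  linarith [inv_le_one_of_one_le₀ hl]

theorem stmt17 (x y : ℤ) (hx : 0 < x) (hy : y < 0) (hxy : 0 < x + y) :
    cfrac [2 * x, 2 * y, -2 * (x + y), 2 * x]
      = cfrac [2 * x - 1, 1, -2 * y - 1, 2 * (x + y) - 1, 1, 2 * x - 1] := by
  have tail₁ : cfrac [2 * y, -2 * (x + y), 2 * x] < -1 :=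
    cfrac_cons_lt_neg_one (by omega)
      (cfrac_cons_lt_zero (by omega) (by rw [cfrac_singleton]; exact_mod_cast (by omega : 1 ≤ 2 * x)))
  have tail₂ : cfrac [-2 * x] < -1 := by
    rw [cfrac_singleton]; exact_mod_cast (by omega : -2 * x < -1)
  have step₂ : cfrac ([-2 * (x + y), 2 * x].map Neg.neg) = cfrac [2 * (x + y) - 1, 1, 2 * x - 1] := by
    convert cfrac_cons_cons_eq_of_ne (2 * (x + y)) (-2 * x) [] (by linarith) tail₂.ne using 2 <;> simp
  calc cfrac [2 * x, 2 * y, -2 * (x + y), 2 * x]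
      = cfrac ([2 * x - 1, 1, -2 * y - 1] ++ [-2 * (x + y), 2 * x].map Neg.neg) := by
        rw [cfrac_cons_cons_eq_of_ne _ _ _ (by linarith) tail₁.ne, ← neg_mul]
        rfl
    _ = cfrac ([2 * x - 1, 1, -2 * y - 1] ++ [2 * (x + y) - 1, 1, 2 * x - 1]) :=
        cfrac_append_congr _ step₂
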